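/- arXiv:cs/0612069 — 2 statements merged into one kernel-verified Lean document; each statement's English description precedes it below -/
import Mathlib

section
/- Let Γ be an ω-categorical structure expanded by all relations that are primitive positive definable in Γ. Then Γ is homomorphically equivalent to a homogeneous core Γᶜ, unique up to isomorphism. -/
open FirstOrder Language Structure

universe u v w

/-- The structure induced on a subset of a relational structure. -/
def Set.inducedStructure (L : Language) [L.IsRelational] {M : Type u} [L.Structure M]
    (s : Set M) : L.Structure s where
  funMap := fun f _ => isEmptyElim f
  RelMap := fun r x => RelMap r fun i => (x i : M)

attribute [instance] Set.inducedStructure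

/-- ω-categoricity via Ryll-Nardzewski: the automorphism group is oligomorphic, i.e.
has finitely many orbits of `n`-tuples for every `n`. -/
def Oligomorphic (L : Language) (M : Type u) [L.Structure M] : Prop :=
  ∀ n : ℕ, ∃ F : Set (Fin n → M), F.Finite ∧
    ∀ t : Fin n → M, ∃ s ∈ F, ∃ α : M ≃[L] M, ∀ i, α (s i) = t i

/-- The age of `M` is contained in the age of `N`: every finite induced substructure of `M`
embeds into `N`. -/
def AgeLE (L : Language) (M : Type u) (N : Type v) [L.Structure M] [L.Structure N] : Prop :=
  ∀ s : Set M, s.Finite → ∃ f : M → N, Set.InjOn f s ∧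
    ∀ (n : ℕ) (r : L.Relations n) (x : Fin n → M), (∀ i, x i ∈ s) →
      (RelMap r x ↔ RelMap r (f ∘ x))

/-- A structure is a core if every endomorphism is an embedding (injective and reflecting
all relations). -/
def IsCore (L : Language) (N : Type u) [L.Structure N] : Prop :=
  ∀ e : N →[L] N, Function.Injective e ∧
    ∀ (n : ℕ) (r : L.Relations n) (x : Fin n → N), RelMap r (⇑e ∘ x) ↔ RelMap r x

/-- A structure is homogeneous if every isomorphism between finite induced substructures
extends to an automorphism. -/
def IsHomogeneous (L : Language) (N : Type u) [L.Structure N] : Prop :=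
  ∀ s : Set N, s.Finite → ∀ f : N → N, Set.InjOn f s →
    (∀ (n : ℕ) (r : L.Relations n) (x : Fin n → N), (∀ i, x i ∈ s) →
      (RelMap r x ↔ RelMap r (f ∘ x))) →
    ∃ α : N ≃[L] N, ∀ a ∈ s, α a = f a

/-- Homomorphic equivalence: homomorphisms exist in both directions. -/
def HomEquiv (L : Language) (M : Type u) (N : Type v) [L.Structure M] [L.Structure N] : Prop :=
  Nonempty (M →[L] N) ∧ Nonempty (N →[L] M)

/-- Existential positive formulas: built from atomic formulas by `∧`, `∨` and `∃`. -/
inductive IsEP {L : Language} {α : Type w} : ∀ {n : ℕ}, L.BoundedFormula α n → Prop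
  | equal {n : ℕ} (t₁ t₂ : L.Term (α ⊕ Fin n)) : IsEP (t₁.bdEqual t₂)
  | rel {n l : ℕ} (R : L.Relations l) (ts : Fin l → L.Term (α ⊕ Fin n)) :
      IsEP (R.boundedFormula ts)
  | inf {n : ℕ} {φ ψ : L.BoundedFormula α n} : IsEP φ → IsEP ψ → IsEP (φ ⊓ ψ)
  | sup {n : ℕ} {φ ψ : L.BoundedFormula α n} : IsEP φ → IsEP ψ → IsEP (φ ⊔ ψ)
  | ex {n : ℕ} {φ : L.BoundedFormula α (n + 1)} : IsEP φ → IsEP φ.ex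

/-- Primitive positive formulas: existentially quantified conjunctions of atomic formulas. -/
inductive IsPP {L : Language} {α : Type w} : ∀ {n : ℕ}, L.BoundedFormula α n → Prop
  | equal {n : ℕ} (t₁ t₂ : L.Term (α ⊕ Fin n)) : IsPP (t₁.bdEqual t₂)
  | rel {n l : ℕ} (R : L.Relations l) (ts : Fin l → L.Term (α ⊕ Fin n)) :
      IsPP (R.boundedFormula ts)
  | inf {n : ℕ} {φ ψ : L.BoundedFormula α n} : IsPP φ → IsPP ψ → IsPP (φ ⊓ ψ)
  | ex {n : ℕ} {φ : L.BoundedFormula α (n + 1)} : IsPP φ → IsPP φ.ex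

/-- Universal formulas. -/
inductive IsUniv {L : Language} {α : Type w} : ∀ {n : ℕ}, L.BoundedFormula α n → Prop
  | of_isQF {n : ℕ} {φ : L.BoundedFormula α n} : φ.IsQF → IsUniv φ
  | all {n : ℕ} {φ : L.BoundedFormula α (n + 1)} : IsUniv φ → IsUniv φ.all

/-- Existential formulas. -/
inductive IsExi {L : Language} {α : Type w} : ∀ {n : ℕ}, L.BoundedFormula α n → Prop
  | of_isQF {n : ℕ} {φ : L.BoundedFormula α n} : φ.IsQF → IsExi φ
  | ex {n : ℕ} {φ : L.BoundedFormula α (n + 1)} : IsExi φ → IsExi φ.ex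

/-- `Γ` contains, among its relations, every relation definable by an existential positive
formula. -/
def ContainsEP (L : Language) (M : Type u) [L.Structure M] : Prop :=
  ∀ (n : ℕ) (φ : L.Formula (Fin n)), IsEP φ →
    ∃ r : L.Relations n, ∀ x : Fin n → M, RelMap r x ↔ φ.Realize x

/-- `Γ` contains, among its relations, every relation definable by a primitive positive
formula. -/
def ContainsPP (L : Language) (M : Type u) [L.Structure M] : Prop :=
  ∀ (n : ℕ) (φ : L.Formula (Fin n)), IsPP φ →
    ∃ r : L.Relations n, ∀ x : Fin n → M, RelMap r x ↔ φ.Realize x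

/-- A structure is model-complete if every self-embedding is elementary. -/
def IsModelComplete (L : Language) (M : Type u) [L.Structure M] : Prop :=
  ∀ e : M ↪[L] M, ∀ (n : ℕ) (φ : L.Formula (Fin n)) (x : Fin n → M),
    φ.Realize x ↔ φ.Realize (⇑e ∘ x)

/-- The universal first-order theory of a structure. -/
def UnivTheory (L : Language) (M : Type u) [L.Structure M] : L.Theory :=
  {σ : L.Sentence | IsUniv σ ∧ M ⊨ σ}
namespace CoreAux

open FirstOrder Language Structure Set

universe x y

variable (L : Language) {M : Type x} [L.Structure M]

/-- pp-type inclusion between tuples. -/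
def ple {n : ℕ} (a b : Fin n → M) : Prop :=
  ∀ r : L.Relations n, RelMap r a → RelMap r b

/-- A tuple is maximal if every tuple above it (in pp-type order) is below it. -/
def pmax {n : ℕ} (a : Fin n → M) : Prop :=
  ∀ b : Fin n → M, ple L a b → ple L b a

variable {L}

theorem ple_refl {n : ℕ} (a : Fin n → M) : ple L a a := fun _ h => h

theorem ple_trans {n : ℕ} {a b c : Fin n → M} (h1 : ple L a b) (h2 : ple L b c) :
    ple L a c := fun r hr => h2 r (h1 r hr)

theorem pmax_zero (a : Fin 0 → M) : pmax L a := by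
  intro b _ r hr
  rwa [Subsingleton.elim a b]

theorem pmax_of_ple_ple {n : ℕ} {a b : Fin n → M} (hmax : pmax L a)
    (h1 : ple L a b) (h2 : ple L b a) : pmax L b := by
  intro c hc
  exact ple_trans (hmax c (ple_trans h1 hc)) h1

/-- Tautological pp formula (realized iff the structure is nonempty). -/
theorem isPP_foldr_inf {α : Type y} {k : ℕ} (l : List (L.BoundedFormula α k))
    (hl : ∀ φ ∈ l, IsPP φ) {base : L.BoundedFormula α k} (hb : IsPP base) :
    IsPP (l.foldr (· ⊓ ·) base) := by
  induction l with
  | nil => exact hb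
  | cons φ t ih =>
      exact IsPP.inf (hl φ List.mem_cons_self)
        (ih fun ψ hψ => hl ψ (List.mem_cons_of_mem _ hψ))

theorem realize_foldr_inf {α : Type y} {k : ℕ} (l : List (L.BoundedFormula α k))
    {base : L.BoundedFormula α k} (v : α → M) (xs : Fin k → M) :
    (l.foldr (· ⊓ ·) base).Realize v xs ↔
      (∀ φ ∈ l, φ.Realize v xs) ∧ base.Realize v xs := by
  induction l with
  | nil => simp
  | cons φ t ih =>
      simp only [List.foldr_cons, BoundedFormula.realize_inf, ih, List.mem_cons]
      constructor
      · rintro ⟨h1, h2, h3⟩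
        exact ⟨fun ψ hψ => hψ.elim (fun e => e ▸ h1) (h2 ψ), h3⟩
      · rintro ⟨h1, h3⟩
        exact ⟨h1 φ (Or.inl rfl), fun ψ hψ => h1 ψ (Or.inr hψ), h3⟩

theorem isPP_exs {α : Type y} {k : ℕ} {φ : L.BoundedFormula α k} (h : IsPP φ) :
    IsPP φ.exs := by
  induction k with
  | zero => exact h
  | succ k ih => exact ih (IsPP.ex h)

section PP

variable [Nonempty M] (hPP : ContainsPP L M)
include hPP

/-- A conjunction of finitely many relations is again (equivalent to) a relation. -/
theorem containsPP_conj {n : ℕ} (T : Finset (L.Relations n)) :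
    ∃ r : L.Relations n, ∀ x : Fin n → M, RelMap r x ↔ ∀ r' ∈ T, RelMap r' x := by
  classical
  set taut : L.BoundedFormula (Fin n) 0 :=
    ((Term.var (Sum.inr (0 : Fin 1))).bdEqual (Term.var (Sum.inr 0))).ex with htaut
  have htautPP : IsPP taut := IsPP.ex (IsPP.equal _ _)
  have htautR : ∀ x : Fin n → M, taut.Realize x (default : Fin 0 → M) := by
    intro x
    rw [htaut, BoundedFormula.realize_ex]
    refine ⟨Classical.arbitrary M, ?_⟩
    rw [BoundedFormula.realize_bdEqual]
  set atoms : List (L.BoundedFormula (Fin n) 0) :=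
    T.toList.map (fun r => r.boundedFormula (fun i => Term.var (Sum.inl i))) with hatoms
  set φ : L.Formula (Fin n) := atoms.foldr (· ⊓ ·) taut with hφ
  have hpp : IsPP φ := by
    refine isPP_foldr_inf _ ?_ htautPP
    intro ψ hψ
    rw [hatoms, List.mem_map] at hψ
    obtain ⟨r, _, rfl⟩ := hψ
    exact IsPP.rel _ _
  obtain ⟨r, hr⟩ := hPP n φ hpp
  refine ⟨r, fun x => (hr x).trans ?_⟩
  rw [hφ, Formula.Realize, realize_foldr_inf]
  constructor
  · rintro ⟨h1, _⟩ r' hr'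
    have := h1 (r'.boundedFormula (fun i => Term.var (Sum.inl i)))
      (by rw [hatoms, List.mem_map]; exact ⟨r', Finset.mem_toList.2 hr', rfl⟩)
    rwa [BoundedFormula.realize_rel] at this
  · intro h
    refine ⟨?_, htautR x⟩
    intro ψ hψ
    rw [hatoms, List.mem_map] at hψ
    obtain ⟨r', hr', rfl⟩ := hψ
    rw [BoundedFormula.realize_rel]
    exact h r' (Finset.mem_toList.1 hr')

/-- Substitution instance of a relation is a relation. -/
theorem containsPP_comp {n l : ℕ} (r : L.Relations l) (σ : Fin l → Fin n) :
    ∃ r' : L.Relations n, ∀ x : Fin n → M, RelMap r' x ↔ RelMap r (x ∘ σ) := by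
  obtain ⟨r', hr'⟩ := hPP n (r.boundedFormula (fun i => Term.var (Sum.inl (σ i))))
    (IsPP.rel _ _)
  refine ⟨r', fun x => (hr' x).trans ?_⟩
  rw [Formula.Realize, BoundedFormula.realize_rel]
  exact Iff.rfl

/-- Existential projection of a relation is a relation. -/
theorem containsPP_exSnoc {n : ℕ} (r : L.Relations (n + 1)) :
    ∃ r' : L.Relations n, ∀ x : Fin n → M,
      RelMap r' x ↔ ∃ y : M, RelMap r (Fin.snoc x y) := by
  set ts : Fin (n + 1) → L.Term (Fin n ⊕ Fin 1) :=
    Fin.snoc (fun i => Term.var (Sum.inl i)) (Term.var (Sum.inr 0)) with hts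
  obtain ⟨r', hr'⟩ := hPP n (r.boundedFormula ts).ex (IsPP.ex (IsPP.rel _ _))
  refine ⟨r', fun x => (hr' x).trans ?_⟩
  rw [Formula.Realize, BoundedFormula.realize_ex]
  have hfun : ∀ y : M,
      (fun i => Term.realize (Sum.elim x (Fin.snoc default y)) (ts i)) = Fin.snoc x y := by
    intro y
    funext i
    refine Fin.lastCases ?_ (fun j => ?_) i
    · rw [hts]; simp [Fin.snoc]
    · rw [hts]; simp
  constructor
  · rintro ⟨y, hy⟩
    rw [BoundedFormula.realize_rel, hfun] at hy
    exact ⟨y, hy⟩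
  · rintro ⟨y, hy⟩
    refine ⟨y, ?_⟩
    rw [BoundedFormula.realize_rel, hfun]
    exact hy

/-- Equality is a relation. -/
theorem containsPP_eq :
    ∃ r : L.Relations 2, ∀ x : Fin 2 → M, RelMap r x ↔ x 0 = x 1 := by
  obtain ⟨r, hr⟩ := hPP 2 ((Term.var (Sum.inl 0)).bdEqual (Term.var (Sum.inl 1)))
    (IsPP.equal _ _)
  refine ⟨r, fun x => (hr x).trans ?_⟩
  rw [Formula.Realize, BoundedFormula.realize_bdEqual]
  simp

/-- A relation pulled back along a (partial) projection with an existential lift. -/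
theorem containsPP_lift {n l : ℕ} (r : L.Relations n) (σ : Fin l → Fin n) :
    ∃ r' : L.Relations l, ∀ c : Fin l → M,
      RelMap r' c ↔ ∃ y : Fin n → M, RelMap r y ∧ ∀ i, y (σ i) = c i := by
  classical
  set eqs : List (L.BoundedFormula (Fin l) n) :=
    (List.finRange l).map
      (fun i => (Term.var (Sum.inr (σ i))).bdEqual (Term.var (Sum.inl i))) with heqs
  set ψ : L.BoundedFormula (Fin l) n :=
    eqs.foldr (· ⊓ ·) (r.boundedFormula (fun j => Term.var (Sum.inr j))) with hψ
  have hpp : IsPP ψ.exs := by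
    refine isPP_exs (isPP_foldr_inf _ ?_ (IsPP.rel _ _))
    intro φ hφ
    rw [heqs, List.mem_map] at hφ
    obtain ⟨i, _, rfl⟩ := hφ
    exact IsPP.equal _ _
  obtain ⟨r', hr'⟩ := hPP l ψ.exs hpp
  refine ⟨r', fun c => (hr' c).trans ?_⟩
  rw [BoundedFormula.realize_exs]
  constructor
  · rintro ⟨y, hy⟩
    rw [hψ, realize_foldr_inf] at hy
    obtain ⟨h1, h2⟩ := hy
    rw [BoundedFormula.realize_rel] at h2
    refine ⟨y, h2, fun i => ?_⟩
    have := h1 ((Term.var (Sum.inr (σ i))).bdEqual (Term.var (Sum.inl i)))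
      (by rw [heqs, List.mem_map]; exact ⟨i, List.mem_finRange i, rfl⟩)
    rw [BoundedFormula.realize_bdEqual] at this
    simpa using this
  · rintro ⟨y, hy1, hy2⟩
    refine ⟨y, ?_⟩
    rw [hψ, realize_foldr_inf]
    constructor
    · intro φ hφ
      rw [heqs, List.mem_map] at hφ
      obtain ⟨i, _, rfl⟩ := hφ
      rw [BoundedFormula.realize_bdEqual]
      simpa using hy2 i
    · rw [BoundedFormula.realize_rel]
      exact hy1

end PP

end CoreAux
namespace CoreAux

open FirstOrder Language Structure Set

variable {L : Language} {M : Type x} [L.Structure M]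

/-- The setoid of pp-type-equivalent tuples. -/
def pSetoid (L : Language) (M : Type x) [L.Structure M] (n : ℕ) :
    Setoid (Fin n → M) where
  r a b := ple L a b ∧ ple L b a
  iseqv := ⟨fun a => ⟨ple_refl a, ple_refl a⟩, fun h => ⟨h.2, h.1⟩,
    fun h1 h2 => ⟨ple_trans h1.1 h2.1, ple_trans h2.2 h1.2⟩⟩

theorem finite_pQuotient (hM : Oligomorphic L M) (n : ℕ) :
    Finite (Quotient (pSetoid L M n)) := by
  obtain ⟨F, hF, hcov⟩ := hM n
  have := hF.to_subtype
  refine Finite.of_surjective (fun s : F => (⟦s.1⟧ : Quotient (pSetoid L M n))) ?_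
  rintro q
  induction q using Quotient.inductionOn with
  | h t =>
    obtain ⟨s, hs, α, hα⟩ := hcov t
    have hts : (⇑α ∘ s) = t := funext hα
    refine ⟨⟨s, hs⟩, Quotient.sound ?_⟩
    have h1 : ∀ r : L.Relations n, RelMap r s ↔ RelMap r t := by
      intro r
      rw [← hts]
      exact (α.map_rel r s).symm
    exact ⟨fun r hr => (h1 r).1 hr, fun r hr => (h1 r).2 hr⟩

section Up

variable [Nonempty M] (hM : Oligomorphic L M) (hPP : ContainsPP L M)
include hM hPP

/-- The pp-type upset of a tuple is itself defined by a single relation. -/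
theorem exists_rel_upset {n : ℕ} (a : Fin n → M) :
    ∃ r : L.Relations n, ∀ b : Fin n → M, RelMap r b ↔ ple L a b := by
  classical
  have hfinq := finite_pQuotient hM n
  set Q := Quotient (pSetoid L M n)
  set Ψ : Set Q → Set (Fin n → M) := fun S => {b | (⟦b⟧ : Q) ∈ S} with hΨ
  set 𝒯 : Set (Set (Fin n → M)) :=
    (fun r : L.Relations n => {b | RelMap r b}) '' {r | RelMap r a} with h𝒯
  have hsat : ∀ T ∈ 𝒯, T = Ψ ((fun b : Fin n → M => (⟦b⟧ : Q)) '' T) := by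
    rintro T ⟨r, _, rfl⟩
    ext b
    constructor
    · intro hb
      exact ⟨b, hb, rfl⟩
    · rintro ⟨c, hc, hcb⟩
      have : (pSetoid L M n).r c b := Quotient.exact hcb
      exact this.1 r hc
  have hTfin : 𝒯.Finite := by
    have : 𝒯 ⊆ Set.range Ψ := by
      intro T hT
      exact ⟨_, (hsat T hT).symm⟩
    exact (Set.finite_range Ψ).subset this
  -- choose a relation for each set in 𝒯
  have hch : ∀ T ∈ 𝒯, ∃ r : L.Relations n, RelMap r a ∧ {b | RelMap r b} = T := by
    rintro T ⟨r, hr, rfl⟩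
    exact ⟨r, hr, rfl⟩
  choose c hc1 hc2 using hch
  set R : Finset (L.Relations n) := hTfin.toFinset.attach.image
    (fun T => c T.1 (hTfin.mem_toFinset.1 T.2)) with hR
  have hRa : ∀ r ∈ R, RelMap r a := by
    intro r hr
    rw [hR, Finset.mem_image] at hr
    obtain ⟨T, hT, rfl⟩ := hr
    exact hc1 _ _
  have hRle : ∀ b : Fin n → M, (∀ r ∈ R, RelMap r b) ↔ ple L a b := by
    intro b
    constructor
    · intro h r₀ hr₀
      have hT : {b | RelMap r₀ b} ∈ 𝒯 := ⟨r₀, hr₀, rfl⟩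
      have hcT : c _ (hTfin.mem_toFinset.1 (hTfin.mem_toFinset.2 hT)) ∈ R := by
        rw [hR, Finset.mem_image]
        exact ⟨⟨_, hTfin.mem_toFinset.2 hT⟩, Finset.mem_attach _ _, rfl⟩
      have hb := h _ hcT
      have h2 := hc2 _ (hTfin.mem_toFinset.1 (hTfin.mem_toFinset.2 hT))
      have hb' : b ∈ {b | RelMap (c {b | RelMap r₀ b}
        (hTfin.mem_toFinset.1 (hTfin.mem_toFinset.2 hT))) b} := hb
      rwa [h2] at hb'
    · intro h r hr
      exact h r (hRa r hr)
  obtain ⟨r, hr⟩ := containsPP_conj hPP R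
  exact ⟨r, fun b => (hr b).trans (hRle b)⟩

end Up

section Lem

variable [Nonempty M] (hPP : ContainsPP L M)
include hPP

/-- (D1) pp-type inclusion is preserved by substitutions. -/
theorem ple_comp {n l : ℕ} {a b : Fin n → M} (h : ple L a b) (σ : Fin l → Fin n) :
    ple L (a ∘ σ) (b ∘ σ) := by
  intro r hr
  obtain ⟨r', hr'⟩ := containsPP_comp hPP r σ
  exact (hr' b).1 (h r' ((hr' a).2 hr))

end Lem

section Lem2

variable [Nonempty M] (hM : Oligomorphic L M) (hPP : ContainsPP L M)
include hM hPP

/-- (D2) maximality is preserved by substitutions. -/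
theorem pmax_comp {n l : ℕ} {b : Fin n → M} (hb : pmax L b) (σ : Fin l → Fin n) :
    pmax L (b ∘ σ) := by
  intro c hc
  obtain ⟨rb, hrb⟩ := exists_rel_upset hM hPP b
  obtain ⟨r', hr'⟩ := containsPP_lift hPP rb σ
  have h1 : RelMap r' (b ∘ σ) := (hr' _).2 ⟨b, (hrb b).2 (ple_refl b), fun _ => rfl⟩
  have h2 : RelMap r' c := hc r' h1
  obtain ⟨y, hy1, hy2⟩ := (hr' c).1 h2
  have hby : ple L b y := (hrb y).1 hy1
  have hyb : ple L y b := hb y hby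
  have : ple L (y ∘ σ) (b ∘ σ) := ple_comp hPP hyb σ
  have hcy : c = y ∘ σ := funext fun i => (hy2 i).symm
  rwa [hcy]

/-- (C) one-point extension along pp-type inclusion. -/
theorem ple_snoc_exists {n : ℕ} {a b : Fin n → M} (h : ple L a b) (a' : M) :
    ∃ b' : M, ple L (Fin.snoc a a') (Fin.snoc b b') := by
  obtain ⟨r, hr⟩ := exists_rel_upset hM hPP (Fin.snoc a a' : Fin (n+1) → M)
  obtain ⟨r', hr'⟩ := containsPP_exSnoc hPP r
  have h1 : RelMap r' a := (hr' a).2 ⟨a', (hr _).2 (ple_refl _)⟩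
  obtain ⟨b', hb'⟩ := (hr' b).1 (h r' h1)
  exact ⟨b', (hr _).1 hb'⟩

/-- Every tuple has a maximal tuple above it. -/
theorem exists_pmax_above {n : ℕ} (a : Fin n → M) :
    ∃ b : Fin n → M, ple L a b ∧ pmax L b := by
  classical
  have hfinq := finite_pQuotient hM n
  have : Fintype (Quotient (pSetoid L M n)) := Fintype.ofFinite _
  set U : (Fin n → M) → Finset (Quotient (pSetoid L M n)) := fun x =>
    Finset.univ.filter (fun q => Quotient.liftOn q (fun y => ple L x y)
      (fun y z hyz => propext ⟨fun h => ple_trans h hyz.1, fun h => ple_trans h hyz.2⟩))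
    with hU
  have hmem : ∀ x : Fin n → M, (⟦x⟧ : Quotient (pSetoid L M n)) ∈ U x := by
    intro x
    rw [hU]
    simp only [Finset.mem_filter, Finset.mem_univ, true_and]
    exact ple_refl x
  have key : ∀ (k : ℕ) (x : Fin n → M), (U x).card ≤ k → ∃ b, ple L x b ∧ pmax L b := by
    intro k
    induction k with
    | zero =>
        intro x hx
        exact absurd (Finset.card_pos.2 ⟨_, hmem x⟩) (by omega)
    | succ k ih =>
        intro x hx
        by_cases hmx : pmax L x
        · exact ⟨x, ple_refl x, hmx⟩
        · rw [pmax] at hmx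
          push_neg at hmx
          obtain ⟨y, hxy, hnyx⟩ := hmx
          have hsub : U y ⊆ U x := by
            intro q hq
            induction q using Quotient.inductionOn with
            | h z =>
              rw [hU] at hq ⊢
              simp only [Finset.mem_filter, Finset.mem_univ, true_and] at hq ⊢
              exact ple_trans hxy hq
          have hne : (⟦x⟧ : Quotient (pSetoid L M n)) ∉ U y := by
            rw [hU]
            simp only [Finset.mem_filter, Finset.mem_univ, true_and]
            intro hyx
            exact hnyx hyx
          have hcard : (U y).card < (U x).card :=
            Finset.card_lt_card ⟨hsub, fun hsup => hne (hsup (hmem x))⟩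
          obtain ⟨b, hyb, hbmax⟩ := ih y (by omega)
          exact ⟨b, ple_trans hxy hyb, hbmax⟩
  exact key (U a).card a le_rfl

end Lem2

/-- Auxiliary: composing snocs. -/
theorem snoc_comp_snoc {n l : ℕ} (A : Fin n → M) (x : M) (σ : Fin l → Fin n) :
    (Fin.snoc A x : Fin (n+1) → M) ∘
      (Fin.snoc (Fin.castSucc ∘ σ) (Fin.last n) : Fin (l+1) → Fin (n+1)) =
      Fin.snoc (A ∘ σ) x := by
  funext i
  refine Fin.lastCases ?_ (fun j => ?_) i
  · simp
  · simp

section Step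

variable [Nonempty M] (hM : Oligomorphic L M) (hPP : ContainsPP L M)
include hM hPP

/-- The key step lemma: extend a maximal tuple by one point, dominating a prescribed
extension of a subtuple, keeping the whole tuple maximal. -/
theorem step_lemma {t l : ℕ} {A : Fin t → M} (hA : pmax L A) (σ : Fin l → Fin t) (d : M) :
    ∃ c : M, pmax L (Fin.snoc A c) ∧
      ple L (Fin.snoc (A ∘ σ) d) (Fin.snoc (A ∘ σ) c) := by
  obtain ⟨C, hC1, hC2⟩ := exists_pmax_above hM hPP (Fin.snoc A d : Fin (t+1) → M)
  have hCsnoc : C = Fin.snoc (C ∘ Fin.castSucc) (C (Fin.last t)) := by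
    funext i
    refine Fin.lastCases ?_ (fun j => ?_) i <;> simp
  have hAC0 : ple L A (C ∘ Fin.castSucc) := by
    have := ple_comp hPP hC1 (Fin.castSucc : Fin t → Fin (t+1))
    have he : (Fin.snoc A d : Fin (t+1) → M) ∘ Fin.castSucc = A := by
      funext j; simp
    rwa [he] at this
  have hC0A : ple L (C ∘ Fin.castSucc) A := hA _ hAC0
  obtain ⟨c, hc⟩ := ple_snoc_exists hM hPP hC0A (C (Fin.last t))
  rw [← hCsnoc] at hc
  have hmaxAc : pmax L (Fin.snoc A c) := pmax_of_ple_ple hC2 hc (hC2 _ hc)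
  have hAdAc : ple L (Fin.snoc A d) (Fin.snoc A c) := ple_trans hC1 hc
  refine ⟨c, hmaxAc, ?_⟩
  have := ple_comp hPP hAdAc
    (Fin.snoc (Fin.castSucc ∘ σ) (Fin.last t) : Fin (l+1) → Fin (t+1))
  rwa [snoc_comp_snoc, snoc_comp_snoc] at this

end Step

end CoreAux
namespace CoreAux

open FirstOrder Language Structure Set

/-- State of the recursive construction. -/
structure StM (M : Type x) where
  f : ℕ → M
  p : ℕ → ℕ
  e : ℕ

section Build

variable (L : Language) (M : Type x) [L.Structure M] [Nonempty M]
variable (m : ℕ → M) (g : ℕ → Option ((Σ l : ℕ, Fin l → ℕ) × ℕ))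

/-- Invariant of the construction at stage `k`. -/
def Inv (k : ℕ) (st : StM M) : Prop :=
  (∀ t, t ≤ k → pmax L (fun i : Fin t => st.f i)) ∧
  (∀ j, j < st.e → st.p j < k) ∧
  ple L (fun i : Fin st.e => m i) (fun i : Fin st.e => st.f (st.p i))

/-- Transition relation of the construction. -/
def NextSt (k : ℕ) (st st' : StM M) : Prop :=
  Inv L M m (k + 1) st' ∧ (∀ i, i < k → st'.f i = st.f i) ∧ st.e ≤ st'.e ∧
  (∀ j, j < st.e → st'.p j = st.p j) ∧
  (g (Nat.unpair k).1 = none → st'.e = st.e + 1) ∧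
  (∀ (l : ℕ) (σ' : Fin l → ℕ) (j : ℕ), g (Nat.unpair k).1 = some (⟨l, σ'⟩, j) →
    (∀ i, σ' i < k) →
    ple L (Fin.snoc (fun i : Fin l => st.f (σ' i)) (m j))
      (Fin.snoc (fun i : Fin l => st.f (σ' i)) (st'.f k)))

variable {L M}

theorem prefix_update_eq (f : ℕ → M) (c : M) (k : ℕ) {t : ℕ} (ht : t ≤ k) :
    (fun i : Fin t => Function.update f k c i) = (fun i : Fin t => f i) := by
  funext i
  exact Function.update_of_ne (by omega) _ _

theorem prefix_update_succ (f : ℕ → M) (c : M) (k : ℕ) :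
    (fun i : Fin (k + 1) => Function.update f k c i) =
      Fin.snoc (fun i : Fin k => f i) c := by
  funext i
  refine Fin.lastCases ?_ (fun j => ?_) i
  · rw [Fin.snoc_last]
    exact Function.update_self _ _ _
  · rw [Fin.snoc_castSucc]
    have : ((Fin.castSucc j : Fin (k + 1)) : ℕ) = (j : ℕ) := rfl
    rw [this]
    exact Function.update_of_ne (by omega) _ _

variable (hM : Oligomorphic L M) (hPP : ContainsPP L M)
include hM hPP

theorem nextSt_exists (k : ℕ) (st : StM M) (h : Inv L M m k st) :
    ∃ st', NextSt L M m g k st st' := by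
  classical
  obtain ⟨h1, h2, h3⟩ := h
  have hA : pmax L (fun i : Fin k => st.f i) := h1 k le_rfl
  -- common construction: given a subtuple index map σ and a point d, produce the
  -- new state with f updated at k
  cases hg : g (Nat.unpair k).1 with
  | none =>
      -- extend the homomorphism
      set σ : Fin st.e → Fin k := fun i => ⟨st.p i, h2 i i.isLt⟩ with hσ
      have hple0 : ple L (fun i : Fin st.e => m i)
          ((fun i : Fin k => st.f i) ∘ σ) := h3
      obtain ⟨d, hd⟩ := ple_snoc_exists hM hPP hple0 (m st.e)
      obtain ⟨c, hc1, hc2⟩ := step_lemma hM hPP hA σ d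
      refine ⟨⟨Function.update st.f k c, Function.update st.p st.e k, st.e + 1⟩,
        ⟨?_, ?_, ?_⟩, ?_, ?_, ?_, ?_, ?_⟩
      · -- Inv.1
        intro t ht
        rcases Nat.lt_or_ge t (k + 1) with h' | h'
        · rw [prefix_update_eq st.f c k (by omega)]
          exact h1 t (by omega)
        · have : t = k + 1 := by omega
          subst this
          rw [prefix_update_succ]
          exact hc1
      · -- Inv.2
        dsimp only
        intro j hj
        rcases Nat.lt_or_ge j st.e with h' | h'
        · rw [Function.update_of_ne (by omega)]
          exact Nat.lt_succ_of_lt (h2 j h')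
        · have : j = st.e := by omega
          subst this
          rw [Function.update_self]
          exact Nat.lt_succ_self k
      · -- Inv.3
        dsimp only
        have hl : (fun i : Fin (st.e + 1) => m i) =
            Fin.snoc (fun i : Fin st.e => m i) (m st.e) := by
          funext i
          refine Fin.lastCases ?_ (fun j => ?_) i
          · rw [Fin.snoc_last]; rfl
          · rw [Fin.snoc_castSucc]; rfl
        have hr : (fun i : Fin (st.e + 1) =>
              Function.update st.f k c (Function.update st.p st.e k i)) =
            Fin.snoc ((fun i : Fin k => st.f i) ∘ σ) c := by
          funext i
          refine Fin.lastCases ?_ (fun j => ?_) i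
          · rw [Fin.snoc_last]
            have h5 : ((Fin.last st.e : Fin (st.e + 1)) : ℕ) = st.e := rfl
            rw [h5, Function.update_self, Function.update_self]
          · rw [Fin.snoc_castSucc]
            have h5 : ((Fin.castSucc j : Fin (st.e + 1)) : ℕ) = (j : ℕ) := rfl
            rw [h5, Function.update_of_ne
                (show (j : ℕ) ≠ st.e from by have := j.isLt; omega),
              Function.update_of_ne
                (show st.p (j : ℕ) ≠ k from by have := h2 j j.isLt; omega)]
            rfl
        rw [hl, hr]
        exact ple_trans hd hc2
      · intro i hi
        exact Function.update_of_ne (by omega) _ _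
      · exact Nat.le_succ _
      · dsimp only
        intro j hj
        exact Function.update_of_ne (by omega) _ _
      · intro _
        rfl
      · intro l σ' j heq _
        rw [hg] at heq
        cases heq
  | some x =>
      obtain ⟨⟨l, σ'⟩, j⟩ := x
      by_cases hguard : ∀ i, σ' i < k
      · set σ : Fin l → Fin k := fun i => ⟨σ' i, hguard i⟩ with hσ
        obtain ⟨c, hc1, hc2⟩ := step_lemma hM hPP hA σ (m j)
        refine ⟨⟨Function.update st.f k c, st.p, st.e⟩,
          ⟨?_, ?_, ?_⟩, ?_, le_rfl, fun _ _ => rfl, ?_, ?_⟩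
        · intro t ht
          rcases Nat.lt_or_ge t (k + 1) with h' | h'
          · rw [prefix_update_eq st.f c k (by omega)]
            exact h1 t (by omega)
          · have : t = k + 1 := by omega
            subst this
            rw [prefix_update_succ]
            exact hc1
        · dsimp only
          intro j' hj'
          exact Nat.lt_succ_of_lt (h2 j' hj')
        · dsimp only
          have hr : (fun i : Fin st.e => Function.update st.f k c (st.p i)) =
              (fun i : Fin st.e => st.f (st.p i)) := by
            funext i
            rw [Function.update_of_ne (by have := h2 i i.isLt; omega)]
          rw [hr]
          exact h3
        · intro i hi
          exact Function.update_of_ne (by omega) _ _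
        · intro heq
          rw [hg] at heq
          cases heq
        · intro l₀ σ₀ j₀ heq hlt
          rw [hg] at heq
          rw [Option.some.injEq, Prod.mk.injEq] at heq
          obtain ⟨hs, rfl⟩ := heq
          obtain ⟨rfl, hσ0⟩ := Sigma.mk.inj_iff.1 hs
          have hσ0' : σ' = σ₀ := eq_of_heq hσ0
          subst hσ0'
          have he1 : ((fun i : Fin k => st.f i) ∘ σ) =
              (fun i : Fin l => st.f (σ' i)) := rfl
          have he2 : Function.update st.f k c k = c := Function.update_self _ _ _
          dsimp only
          rw [he2]
          rw [he1] at hc2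
          exact hc2
      · -- dummy step
        obtain ⟨c, hc1, _⟩ := step_lemma hM hPP hA (Fin.elim0 : Fin 0 → Fin k)
          (Classical.arbitrary M)
        refine ⟨⟨Function.update st.f k c, st.p, st.e⟩,
          ⟨?_, ?_, ?_⟩, ?_, le_rfl, fun _ _ => rfl, ?_, ?_⟩
        · intro t ht
          rcases Nat.lt_or_ge t (k + 1) with h' | h'
          · rw [prefix_update_eq st.f c k (by omega)]
            exact h1 t (by omega)
          · have : t = k + 1 := by omega
            subst this
            rw [prefix_update_succ]
            exact hc1
        · dsimp only
          intro j' hj'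
          exact Nat.lt_succ_of_lt (h2 j' hj')
        · dsimp only
          have hr : (fun i : Fin st.e => Function.update st.f k c (st.p i)) =
              (fun i : Fin st.e => st.f (st.p i)) := by
            funext i
            rw [Function.update_of_ne (by have := h2 i i.isLt; omega)]
          rw [hr]
          exact h3
        · intro i hi
          exact Function.update_of_ne (by omega) _ _
        · intro heq
          rw [hg] at heq
          cases heq
        · intro l₀ σ₀ j₀ heq hlt
          rw [hg] at heq
          rw [Option.some.injEq, Prod.mk.injEq] at heq
          obtain ⟨hs, rfl⟩ := heq
          obtain ⟨rfl, hσ0⟩ := Sigma.mk.inj_iff.1 hs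
          have hσ0' : σ' = σ₀ := eq_of_heq hσ0
          subst hσ0'
          exact absurd hlt hguard

/-- The recursively constructed sequence of states. -/
noncomputable def buildSt : (k : ℕ) → {st : StM M // Inv L M m k st}
  | 0 => ⟨⟨fun _ => Classical.arbitrary M, id, 0⟩, by
      refine ⟨?_, ?_, ?_⟩
      · intro t ht
        obtain rfl : t = 0 := Nat.le_zero.1 ht
        exact pmax_zero _
      · dsimp only
        intro j hj
        exact absurd hj (by omega)
      · intro r hr
        rwa [Subsingleton.elim
          (fun i : Fin (0 : ℕ) => (Classical.arbitrary M)) (fun i : Fin (0 : ℕ) => m i)]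
        ⟩
  | k + 1 =>
      ⟨Classical.choose (nextSt_exists m g hM hPP k (buildSt k).1 (buildSt k).2),
        (Classical.choose_spec (nextSt_exists m g hM hPP k (buildSt k).1 (buildSt k).2)).1⟩

theorem buildSt_next (k : ℕ) :
    NextSt L M m g k (buildSt m g hM hPP k).1 (buildSt m g hM hPP (k + 1)).1 := by
  have h := Classical.choose_spec
    (nextSt_exists m g hM hPP k (buildSt m g hM hPP k).1 (buildSt m g hM hPP k).2)
  exact h

end Build

end CoreAux
namespace CoreAux

open FirstOrder Language Structure Set

variable {L : Language} {M : Type x} [L.Structure M]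

/-- Main construction: a sequence enumerating the future core, together with a
homomorphism-like retraction of `M` onto its range. -/
theorem exists_good [Nonempty M] [Countable M]
    (hM : Oligomorphic L M) (hPP : ContainsPP L M) :
    ∃ (a : ℕ → M) (h : M → M),
      (∀ x, h x ∈ Set.range a) ∧
      (∀ (l : ℕ) (σ' : Fin l → ℕ), pmax L (fun i => a (σ' i))) ∧
      (∀ (l : ℕ) (σ' : Fin l → ℕ) (d : M), ∃ q : ℕ,
        ple L (Fin.snoc (fun i => a (σ' i)) d) (Fin.snoc (fun i => a (σ' i)) (a q))) ∧
      (∀ (nr : ℕ) (x : Fin nr → M), ple L x (h ∘ x)) := by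
  classical
  obtain ⟨m, hm⟩ := exists_surjective_nat M
  obtain ⟨g, hg⟩ := exists_surjective_nat (Option ((Σ l : ℕ, Fin l → ℕ) × ℕ))
  set T := buildSt m g hM hPP with hT
  have hnext : ∀ k, NextSt L M m g k (T k).1 (T (k + 1)).1 := fun k =>
    buildSt_next m g hM hPP k
  set a : ℕ → M := fun i => (T (i + 1)).1.f i with ha
  -- stability of f
  have hstabf : ∀ k i, i < k → (T k).1.f i = a i := by
    intro k
    induction k with
    | zero => intro i hi; omega
    | succ k ih =>
        intro i hi
        rcases Nat.lt_or_ge i k with h' | h'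
        · rw [(hnext k).2.1 i h']
          exact ih i h'
        · have : i = k := by omega
          subst this
          rfl
  -- maximality of all tuples from the range
  have hmax : ∀ (l : ℕ) (σ' : Fin l → ℕ), pmax L (fun i => a (σ' i)) := by
    intro l σ'
    set k := (Finset.univ.sup σ') + 1 with hk
    have hlt : ∀ i, σ' i < k := fun i =>
      Nat.lt_succ_of_le (Finset.le_sup (Finset.mem_univ i))
    have hpre : pmax L (fun i : Fin k => (T k).1.f i) := (T k).2.1 k le_rfl
    have := pmax_comp hM hPP hpre (fun i : Fin l => (⟨σ' i, hlt i⟩ : Fin k))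
    have he : ((fun i : Fin k => (T k).1.f i) ∘ (fun i : Fin l => (⟨σ' i, hlt i⟩ : Fin k)))
        = fun i => a (σ' i) := by
      funext i
      exact hstabf k (σ' i) (hlt i)
    rwa [he] at this
  -- saturation
  have hsat : ∀ (l : ℕ) (σ' : Fin l → ℕ) (d : M), ∃ q : ℕ,
      ple L (Fin.snoc (fun i => a (σ' i)) d) (Fin.snoc (fun i => a (σ' i)) (a q)) := by
    intro l σ' d
    obtain ⟨j, hj⟩ := hm d
    obtain ⟨k₀, hk₀⟩ := hg (some (⟨l, σ'⟩, j))
    set k := Nat.pair k₀ ((Finset.univ.sup σ') + 1) with hk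
    have hlt : ∀ i, σ' i < k := by
      intro i
      have h1 : σ' i < (Finset.univ.sup σ') + 1 :=
        Nat.lt_succ_of_le (Finset.le_sup (Finset.mem_univ i))
      have h2 : (Finset.univ.sup σ') + 1 ≤ k := Nat.right_le_pair _ _
      omega
    have htask : g (Nat.unpair k).1 = some (⟨l, σ'⟩, j) := by
      rw [hk, Nat.unpair_pair]
      exact hk₀
    have := (hnext k).2.2.2.2.2 l σ' j htask hlt
    have he1 : (fun i : Fin l => (T k).1.f (σ' i)) = fun i => a (σ' i) := by
      funext i
      exact hstabf k (σ' i) (hlt i)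
    have he2 : (T (k + 1)).1.f k = a k := rfl
    rw [he1, he2, hj] at this
    exact ⟨k, this⟩
  -- e is monotone and unbounded
  have hemono : ∀ k k', k ≤ k' → (T k).1.e ≤ (T k').1.e := by
    intro k k' hk
    induction k' , hk using Nat.le_induction with
    | base => exact le_rfl
    | succ k' hk ih => exact le_trans ih (hnext k').2.2.1
  have heunb : ∀ b, ∃ k, b ≤ (T k).1.e := by
    intro b
    induction b with
    | zero => exact ⟨0, Nat.zero_le _⟩
    | succ b ih =>
        obtain ⟨k, hk⟩ := ih
        obtain ⟨k₀, hk₀⟩ := hg none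
        set j := Nat.pair k₀ k with hj
        have h1 : k ≤ j := Nat.right_le_pair _ _
        have h3 : (T (j + 1)).1.e = (T j).1.e + 1 :=
          (hnext j).2.2.2.2.1 (by rw [hj, Nat.unpair_pair]; exact hk₀)
        have h4 : b ≤ (T j).1.e := le_trans hk (hemono k j h1)
        exact ⟨j + 1, by omega⟩
  -- stability of p
  have hstabp : ∀ j k k', k ≤ k' → j < (T k).1.e → (T k').1.p j = (T k).1.p j := by
    intro j k k' hk hj
    induction k' , hk using Nat.le_induction with
    | base => rfl
    | succ k' hk ih =>
        rw [(hnext k').2.2.2.1 j (lt_of_lt_of_le hj (hemono k k' hk))]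
        exact ih
  set K : ℕ → ℕ := fun j => Nat.find (heunb (j + 1)) with hK
  have hKspec : ∀ j, j < (T (K j)).1.e := fun j => Nat.find_spec (heunb (j + 1))
  set P : ℕ → ℕ := fun j => (T (K j)).1.p j with hP
  -- the homomorphism inequality
  have hEple : ∀ t : ℕ, ple L (fun i : Fin t => m i) (fun i : Fin t => a (P i)) := by
    intro t
    obtain ⟨k, hk⟩ := heunb t
    have h3 := (T k).2.2.2
    have := ple_comp hPP h3 (fun i : Fin t =>
      (⟨(i : ℕ), lt_of_lt_of_le i.isLt hk⟩ : Fin (T k).1.e))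
    have he1 : ((fun i : Fin (T k).1.e => m i) ∘ (fun i : Fin t =>
        (⟨(i : ℕ), lt_of_lt_of_le i.isLt hk⟩ : Fin (T k).1.e))) =
        (fun i : Fin t => m i) := rfl
    have he2 : ((fun i : Fin (T k).1.e => (T k).1.f ((T k).1.p i)) ∘ (fun i : Fin t =>
        (⟨(i : ℕ), lt_of_lt_of_le i.isLt hk⟩ : Fin (T k).1.e))) =
        (fun i : Fin t => a (P i)) := by
      funext i
      have hje : (i : ℕ) < (T k).1.e := lt_of_lt_of_le i.isLt hk
      have hKk : K (i : ℕ) ≤ k := Nat.find_min' _ hje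
      have hpk : (T k).1.p i = P i := hstabp i (K i) k hKk (hKspec i)
      have hplt : (T k).1.p i < k := (T k).2.2.1 i hje
      simp only [Function.comp_apply]
      rw [hpk] at hplt ⊢
      exact hstabf k (P i) hplt
    rw [he1, he2] at this
    exact this
  set idx : M → ℕ := fun x => Nat.find (hm x) with hidx
  have hidxspec : ∀ x, m (idx x) = x := fun x => Nat.find_spec (hm x)
  refine ⟨a, fun x => a (P (idx x)), fun x => Set.mem_range_self _, hmax, hsat, ?_⟩
  intro nr x
  set t := (Finset.univ.sup (fun i => idx (x i))) + 1 with ht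
  have hlt : ∀ i, idx (x i) < t := fun i =>
    Nat.lt_succ_of_le (Finset.le_sup (f := fun i => idx (x i)) (Finset.mem_univ i))
  have := ple_comp hPP (hEple t) (fun i : Fin nr => (⟨idx (x i), hlt i⟩ : Fin t))
  have he1 : ((fun i : Fin t => m i) ∘ (fun i : Fin nr =>
      (⟨idx (x i), hlt i⟩ : Fin t))) = x := by
    funext i
    exact hidxspec (x i)
  have he2 : ((fun i : Fin t => a (P i)) ∘ (fun i : Fin nr =>
      (⟨idx (x i), hlt i⟩ : Fin t))) = (fun y => a (P (idx y))) ∘ x := rfl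
  rw [he1, he2] at this
  exact this

end CoreAux
namespace CoreAux

open FirstOrder Language Structure Set

/-- A finite partial strong map. -/
def PStrong (L : Language) {X : Type x} {Y : Type x} [L.Structure X] [L.Structure Y]
    (s : Set X) (f : X → Y) : Prop :=
  Set.InjOn f s ∧ ∀ (n : ℕ) (r : L.Relations n) (x : Fin n → X), (∀ i, x i ∈ s) →
    (RelMap r x ↔ RelMap r (f ∘ x))

/-- Generic chain construction. -/
noncomputable def chainF {S : Type x} {Good : ℕ → S → Prop} {R : ℕ → S → S → Prop}
    (init : S) (h0 : Good 0 init)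
    (hstep : ∀ k st, Good k st → ∃ st', Good (k + 1) st' ∧ R k st st') :
    (k : ℕ) → {st : S // Good k st}
  | 0 => ⟨init, h0⟩
  | k + 1 =>
      ⟨(hstep k (chainF init h0 hstep k).1 (chainF init h0 hstep k).2).choose,
        (hstep k (chainF init h0 hstep k).1 (chainF init h0 hstep k).2).choose_spec.1⟩

theorem chainF_spec {S : Type x} {Good : ℕ → S → Prop} {R : ℕ → S → S → Prop}
    (init : S) (h0 : Good 0 init)
    (hstep : ∀ k st, Good k st → ∃ st', Good (k + 1) st' ∧ R k st st') (k : ℕ) :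
    R k (chainF init h0 hstep k).1 (chainF init h0 hstep (k + 1)).1 :=
  (hstep k (chainF init h0 hstep k).1 (chainF init h0 hstep k).2).choose_spec.2

section BF

variable {L : Language} [L.IsRelational] {X Y : Type x}
  [L.Structure X] [L.Structure Y] [Countable X] [Countable Y]

/-- From a one-point extension property in the reverse direction, partial strong maps can
be extended to cover a prescribed point of the codomain. -/
theorem pstrong_back (w : Y → X)
    (H1' : ∀ (t : Set Y) (g : Y → X), t.Finite → PStrong L t g → ∀ b : Y,
      ∃ g', PStrong L (insert b t) g' ∧ Set.EqOn g g' t)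
    (s : Set X) (f : X → Y) (hs : s.Finite) (hps : PStrong L s f) (b : Y) :
    ∃ (a : X) (f' : X → Y), PStrong L (insert a s) f' ∧ Set.EqOn f f' s ∧ f' a = b := by
  classical
  set t : Set Y := f '' s with hts
  set gInv : Y → X := fun y => if h : ∃ x ∈ s, f x = y then h.choose else w y with hgInv
  have hgspec : ∀ y ∈ t, gInv y ∈ s ∧ f (gInv y) = y := by
    intro y hy
    obtain ⟨x, hx, rfl⟩ := hy
    have h : ∃ x' ∈ s, f x' = f x := ⟨x, hx, rfl⟩
    rw [hgInv]
    simp only [dif_pos h]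
    exact ⟨h.choose_spec.1, h.choose_spec.2⟩
  have hginvf : ∀ x ∈ s, gInv (f x) = x := by
    intro x hx
    have h1 := hgspec (f x) ⟨x, hx, rfl⟩
    exact hps.1 h1.1 hx h1.2
  have hpt : PStrong L t gInv := by
    constructor
    · intro y1 hy1 y2 hy2 he
      have h1 := hgspec y1 hy1
      have h2 := hgspec y2 hy2
      rw [← h1.2, ← h2.2, he]
    · intro n r y hy
      have hmem : ∀ i, gInv (y i) ∈ s := fun i => (hgspec _ (hy i)).1
      have he : f ∘ (gInv ∘ y) = y := by
        funext i
        exact (hgspec _ (hy i)).2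
      have := hps.2 n r (gInv ∘ y) hmem
      rw [he] at this
      exact this.symm
  obtain ⟨g', hg', hgeq⟩ := H1' t gInv (hs.image f) hpt b
  set a : X := g' b with ha
  have hga : ∀ x ∈ insert a s, ∃ y ∈ insert b t, g' y = x := by
    intro x hx
    rcases hx with rfl | hx
    · exact ⟨b, Set.mem_insert _ _, rfl⟩
    · exact ⟨f x, Set.mem_insert_of_mem _ ⟨x, hx, rfl⟩,
        by rw [← hgeq ⟨x, hx, rfl⟩]; exact hginvf x hx⟩
  set f' : X → Y := fun x => if h : ∃ y ∈ insert b t, g' y = x then h.choose else f x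
    with hf'
  have hf'spec : ∀ x ∈ insert a s, f' x ∈ insert b t ∧ g' (f' x) = x := by
    intro x hx
    have h := hga x hx
    rw [hf']
    simp only [dif_pos h]
    exact ⟨h.choose_spec.1, h.choose_spec.2⟩
  have hfeq : Set.EqOn f f' s := by
    intro x hx
    have h1 := hf'spec x (Set.mem_insert_of_mem _ hx)
    have h2 : g' (f x) = x := by rw [← hgeq ⟨x, hx, rfl⟩]; exact hginvf x hx
    have := hg'.1 h1.1 (Set.mem_insert_of_mem _ ⟨x, hx, rfl⟩) (by rw [h1.2, h2])
    exact this.symm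
  have hf'a : f' a = b := by
    have h1 := hf'spec a (Set.mem_insert _ _)
    exact hg'.1 h1.1 (Set.mem_insert _ _) (by rw [h1.2])
  refine ⟨a, f', ⟨?_, ?_⟩, hfeq, hf'a⟩
  · intro x1 hx1 x2 hx2 he
    rw [← (hf'spec x1 hx1).2, ← (hf'spec x2 hx2).2, he]
  · intro n r x hx
    have hmem : ∀ i, f' (x i) ∈ insert b t := fun i => (hf'spec _ (hx i)).1
    have he : g' ∘ (f' ∘ x) = x := by
      funext i
      exact (hf'spec _ (hx i)).2
    have := hg'.2 n r (f' ∘ x) hmem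
    rw [he] at this
    exact this.symm

/-- The back-and-forth limit: two countable structures with mutual one-point extension
properties for partial strong maps are isomorphic, extending any given partial strong map. -/
theorem bf_limit (w : Y → X) (s₀ : Set X) (f₀ : X → Y) (hs₀ : s₀.Finite)
    (h₀ : PStrong L s₀ f₀)
    (H1 : ∀ (s : Set X) (f : X → Y), s.Finite → PStrong L s f → ∀ a : X,
      ∃ f', PStrong L (insert a s) f' ∧ Set.EqOn f f' s)
    (H1' : ∀ (t : Set Y) (g : Y → X), t.Finite → PStrong L t g → ∀ b : Y,
      ∃ g', PStrong L (insert b t) g' ∧ Set.EqOn g g' t) :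
    ∃ α : X ≃[L] Y, ∀ x ∈ s₀, α x = f₀ x := by
  classical
  rcases isEmpty_or_nonempty X with hX | hX
  · haveI : IsEmpty Y := ⟨fun b => hX.false (w b)⟩
    refine ⟨⟨Equiv.equivOfIsEmpty X Y, fun {n} f _ => isEmptyElim f, ?_⟩,
      fun x _ => isEmptyElim x⟩
    intro n r x
    match n, r, x with
    | 0, r, x =>
        have h := h₀.2 0 r x (fun i => i.elim0)
        rw [Subsingleton.elim ((Equiv.equivOfIsEmpty X Y).toFun ∘ x) (f₀ ∘ x)]
        exact h.symm
    | n + 1, r, x => exact isEmptyElim (x 0)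
  · have hY : Nonempty Y := ⟨f₀ (Classical.arbitrary X)⟩
    obtain ⟨eX, heX⟩ := exists_surjective_nat X
    obtain ⟨eY, heY⟩ := exists_surjective_nat Y
    set Good : ℕ → Set X × (X → Y) → Prop := fun k st =>
      st.1.Finite ∧ PStrong L st.1 st.2 ∧ s₀ ⊆ st.1 ∧ Set.EqOn f₀ st.2 s₀ ∧
      (∀ i, i < k → eX i ∈ st.1) ∧ (∀ i, i < k → eY i ∈ st.2 '' st.1) with hGood
    set R : ℕ → Set X × (X → Y) → Set X × (X → Y) → Prop := fun _ st st' =>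
      st.1 ⊆ st'.1 ∧ Set.EqOn st.2 st'.2 st.1 with hR
    have h0 : Good 0 (s₀, f₀) := ⟨hs₀, h₀, Set.Subset.rfl, fun _ _ => rfl,
      fun i hi => absurd hi (by omega), fun i hi => absurd hi (by omega)⟩
    have hstep : ∀ k st, Good k st → ∃ st', Good (k + 1) st' ∧ R k st st' := by
      rintro k ⟨s, f⟩ ⟨hfin, hps, hsub, heq, hcX, hcY⟩
      dsimp only at hfin hps hsub heq hcX hcY
      -- first extend to cover eX k
      obtain ⟨f1, hps1, heq1⟩ := H1 s f hfin hps (eX k)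
      have hfin1 : (insert (eX k) s).Finite := hfin.insert _
      -- then extend to cover eY k
      obtain ⟨a, f2, hps2, heq2, hf2a⟩ :=
        pstrong_back w H1' (insert (eX k) s) f1 hfin1 hps1 (eY k)
      refine ⟨(insert a (insert (eX k) s), f2), ⟨hfin1.insert _, hps2, ?_, ?_, ?_, ?_⟩,
        ?_, ?_⟩
      · exact hsub.trans ((Set.subset_insert _ _).trans (Set.subset_insert _ _))
      · intro x hx
        show f₀ x = f2 x
        rw [heq hx, heq1 (hsub hx), heq2 (Set.mem_insert_of_mem _ (hsub hx))]
      · intro i hi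
        rcases Nat.lt_or_ge i k with h' | h'
        · exact Set.mem_insert_of_mem _ (Set.mem_insert_of_mem _ (hcX i h'))
        · have : i = k := by omega
          subst this
          exact Set.mem_insert_of_mem _ (Set.mem_insert _ _)
      · intro i hi
        rcases Nat.lt_or_ge i k with h' | h'
        · obtain ⟨x, hx, hfx⟩ := hcY i h'
          refine ⟨x, Set.mem_insert_of_mem _ (Set.mem_insert_of_mem _ hx), ?_⟩
          show f2 x = eY i
          rw [← heq2 (Set.mem_insert_of_mem _ hx), ← heq1 hx]
          exact hfx
        · have : i = k := by omega
          subst this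
          exact ⟨a, Set.mem_insert _ _, hf2a⟩
      · exact (Set.subset_insert _ _).trans (Set.subset_insert _ _)
      · intro x hx
        show f x = f2 x
        rw [heq1 hx, heq2 (Set.mem_insert_of_mem _ hx)]
    set T : (k : ℕ) → {st : Set X × (X → Y) // Good k st} := chainF (s₀, f₀) h0 hstep
      with hT
    have hTspec : ∀ k, R k (T k).1 (T (k + 1)).1 := fun k => chainF_spec (s₀, f₀) h0 hstep k
    have hT0 : T 0 = ⟨(s₀, f₀), h0⟩ := rfl
    have hmono : ∀ k k', k ≤ k' → (T k).1.1 ⊆ (T k').1.1 ∧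
        Set.EqOn (T k).1.2 (T k').1.2 (T k).1.1 := by
      intro k k' hk
      induction k' , hk using Nat.le_induction with
      | base => exact ⟨Set.Subset.rfl, fun _ _ => rfl⟩
      | succ k' hk ih =>
          obtain ⟨h1, h2⟩ := ih
          obtain ⟨h3, h4⟩ := hTspec k'
          exact ⟨h1.trans h3, fun x hx => (h2 hx).trans (h4 (h1 hx))⟩
    have hcov : ∀ x : X, ∃ k, x ∈ (T k).1.1 := by
      intro x
      obtain ⟨i, rfl⟩ := heX x
      exact ⟨i + 1, ((T (i + 1)).2).2.2.2.2.1 i (by omega)⟩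
    set κ : X → ℕ := fun x => Nat.find (hcov x) with hκ
    set F : X → Y := fun x => (T (κ x)).1.2 x with hF
    have hstabF : ∀ x (k : ℕ), x ∈ (T k).1.1 → (T k).1.2 x = F x := by
      intro x k hx
      have h1 : κ x ≤ k := Nat.find_min' _ hx
      have h2 := (hmono (κ x) k h1).2 (Nat.find_spec (hcov x))
      rw [hF, ← h2]
    have hinj : Function.Injective F := by
      intro x1 x2 he
      set k := max (κ x1) (κ x2) with hk
      have hm1 : x1 ∈ (T k).1.1 := (hmono (κ x1) k (le_max_left _ _)).1
        (Nat.find_spec (hcov x1))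
      have hm2 : x2 ∈ (T k).1.1 := (hmono (κ x2) k (le_max_right _ _)).1
        (Nat.find_spec (hcov x2))
      refine ((T k).2).2.1.1 hm1 hm2 ?_
      rw [hstabF x1 k hm1, hstabF x2 k hm2, he]
    have hsurj : Function.Surjective F := by
      intro y
      obtain ⟨i, rfl⟩ := heY y
      obtain ⟨x, hx, hfx⟩ := ((T (i + 1)).2).2.2.2.2.2 i (by omega)
      exact ⟨x, by rw [← hstabF x (i + 1) hx]; exact hfx⟩
    have hiff : ∀ (n : ℕ) (r : L.Relations n) (x : Fin n → X),
        RelMap r x ↔ RelMap r (F ∘ x) := by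
      intro n r x
      set k := Finset.univ.sup (fun i => κ (x i)) with hk
      have hm : ∀ i, x i ∈ (T k).1.1 := fun i =>
        (hmono (κ (x i)) k (Finset.le_sup (f := fun i => κ (x i)) (Finset.mem_univ i))).1
        (Nat.find_spec (hcov (x i)))
      have hPSk : PStrong L (T k).1.1 (T k).1.2 := ((T k).2).2.1
      have := hPSk.2 n r x hm
      have heF : (T k).1.2 ∘ x = F ∘ x := by
        funext i
        exact hstabF (x i) k (hm i)
      rwa [heF] at this
    refine ⟨⟨Equiv.ofBijective F ⟨hinj, hsurj⟩, fun {n} f _ => isEmptyElim f, ?_⟩, ?_⟩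
    · intro n r x
      exact (hiff n r x).symm
    · intro x hx
      have hx0 : x ∈ (T 0).1.1 := hx
      show F x = f₀ x
      rw [← hstabF x 0 hx0]
      rfl

end BF

end CoreAux
namespace CoreAux

open FirstOrder Language Structure Set

section Main

variable {L : Language} [L.IsRelational] {M : Type u} [L.Structure M] [Nonempty M]

section WithSeq

variable (hM : Oligomorphic L M) (hPP : ContainsPP L M) {a : ℕ → M}
  (hmaxa : ∀ (l : ℕ) (σ' : Fin l → ℕ), pmax L (fun i => a (σ' i)))
  (hsata : ∀ (l : ℕ) (σ' : Fin l → ℕ) (d : M), ∃ q : ℕ,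
    ple L (Fin.snoc (fun i => a (σ' i)) d) (Fin.snoc (fun i => a (σ' i)) (a q)))

/-- Any tuple from the range of `a` is maximal. -/
theorem maxN (hmaxa : ∀ (l : ℕ) (σ' : Fin l → ℕ), pmax L (fun i => a (σ' i)))
    {n : ℕ} (x : Fin n → M) (hx : ∀ i, x i ∈ Set.range a) : pmax L x := by
  choose σ' hσ' using hx
  have : x = fun i => a (σ' i) := funext fun i => (hσ' i).symm
  rw [this]
  exact hmaxa n σ'

include hM hPP hmaxa hsata

/-- One-point extension property for partial strong self-maps of the core. -/
theorem H1N : ∀ (s : Set ↥(Set.range a)) (f : ↥(Set.range a) → ↥(Set.range a)),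
    s.Finite → PStrong L s f → ∀ a' : ↥(Set.range a),
      ∃ f', PStrong L (insert a' s) f' ∧ Set.EqOn f f' s := by
  classical
  intro s f hs hps a'
  by_cases ha' : a' ∈ s
  · rw [Set.insert_eq_self.2 ha']
    exact ⟨f, hps, fun _ _ => rfl⟩
  obtain ⟨l, bemb, hbrange⟩ := hs.fin_embedding
  set b : Fin l → ↥(Set.range a) := fun i => bemb i with hb
  have hbs : ∀ i, b i ∈ s := fun i => by rw [← hbrange]; exact ⟨i, rfl⟩
  set β : Fin l → M := fun i => (b i : M) with hβ
  set γ : Fin l → M := fun i => (f (b i) : M) with hγ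
  have hβγ : ∀ r : L.Relations l, RelMap r β ↔ RelMap r γ := by
    intro r
    have := hps.2 l r b hbs
    exact this
  obtain ⟨d, hd⟩ := ple_snoc_exists hM hPP (fun r hr => (hβγ r).1 hr) (a' : M)
  have hsnocmem : ∀ i : Fin (l + 1), (Fin.snoc β (a' : M) : Fin (l + 1) → M) i ∈ Set.range a := by
    intro i
    refine Fin.lastCases ?_ (fun j => ?_) i
    · rw [Fin.snoc_last]; exact a'.2
    · rw [Fin.snoc_castSucc]; exact (b j).2
  have hmaxsnoc : pmax L (Fin.snoc β (a' : M)) := maxN hmaxa _ hsnocmem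
  have hd2 : ple L (Fin.snoc γ d) (Fin.snoc β (a' : M)) := hmaxsnoc _ hd
  -- saturation gives a witness inside the range of a
  have hγr : ∀ i, γ i ∈ Set.range a := fun i => (f (b i)).2
  choose σγ hσγ using hγr
  have hγeq : γ = fun i => a (σγ i) := funext fun i => (hσγ i).symm
  obtain ⟨q, hq⟩ := hsata l σγ d
  rw [← hγeq] at hq
  have hmaxγd : pmax L (Fin.snoc γ d) := pmax_of_ple_ple hmaxsnoc hd hd2
  have hq2 : ple L (Fin.snoc γ (a q)) (Fin.snoc γ d) := hmaxγd _ hq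
  have E1 : ple L (Fin.snoc β (a' : M)) (Fin.snoc γ (a q)) := ple_trans hd hq
  have E2 : ple L (Fin.snoc γ (a q)) (Fin.snoc β (a' : M)) := ple_trans hq2 hd2
  set c' : ↥(Set.range a) := ⟨a q, Set.mem_range_self q⟩ with hc'
  set f' : ↥(Set.range a) → ↥(Set.range a) := Function.update f a' c' with hf'
  have hfeq : Set.EqOn f f' s := by
    intro x hx
    rw [hf', Function.update_of_ne (fun hxa => ha' (by rw [← hxa]; exact hx))]
  have hidx : ∀ (x : ↥(Set.range a)), x ∈ insert a' s → x ≠ a' → ∃ j : Fin l, b j = x := by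
    intro x hx hxa
    have hxs : x ∈ s := hx.resolve_left hxa
    rw [← hbrange] at hxs
    obtain ⟨j, hj⟩ := hxs
    exact ⟨j, hj⟩
  have hrel : ∀ (nr : ℕ) (r : L.Relations nr) (x : Fin nr → ↥(Set.range a)),
      (∀ i, x i ∈ insert a' s) →
      (RelMap r x ↔ RelMap r (f' ∘ x)) := by
    intro nr r x hx
    set τ : Fin nr → Fin (l + 1) := fun i =>
      if hxa : x i = a' then Fin.last l
      else Fin.castSucc (hidx (x i) (hx i) hxa).choose with hτ
    have hτ1 : (Fin.snoc β (a' : M)) ∘ τ = fun i => (x i : M) := by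
      funext i
      rw [hτ]
      simp only [Function.comp_apply]
      by_cases hxa : x i = a'
      · rw [dif_pos hxa, Fin.snoc_last, hxa]
      · rw [dif_neg hxa, Fin.snoc_castSucc]
        have hbj := (hidx (x i) (hx i) hxa).choose_spec
        show ((b ((hidx (x i) (hx i) hxa).choose)) : M) = (x i : M)
        rw [hbj]
    have hτ2 : (Fin.snoc γ (a q)) ∘ τ = fun i => ((f' (x i)) : M) := by
      funext i
      rw [hτ]
      simp only [Function.comp_apply]
      by_cases hxa : x i = a'
      · rw [dif_pos hxa, Fin.snoc_last, hxa, hf', Function.update_self]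
      · rw [dif_neg hxa, Fin.snoc_castSucc]
        have hb' := (hidx (x i) (hx i) hxa).choose_spec
        have hxs : x i ∈ s := (hx i).resolve_left hxa
        show ((f (b ((hidx (x i) (hx i) hxa).choose))) : M) = ((f' (x i)) : M)
        rw [hb', hfeq hxs]
    show RelMap r (fun i => (x i : M)) ↔ RelMap r (fun i => ((f' (x i)) : M))
    constructor
    · intro hr
      have h1 : RelMap r ((Fin.snoc β (a' : M)) ∘ τ) := by rwa [hτ1]
      have h2 := ple_comp hPP E1 τ r h1
      rwa [hτ2] at h2
    · intro hr
      have h1 : RelMap r ((Fin.snoc γ (a q)) ∘ τ) := by rwa [hτ2]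
      have h2 := ple_comp hPP E2 τ r h1
      rwa [hτ1] at h2
  obtain ⟨req, hreq⟩ := containsPP_eq hPP
  have hinj : Set.InjOn f' (insert a' s) := by
    intro x1 hx1 x2 hx2 he
    have hpair : ∀ i : Fin 2, (![x1, x2]) i ∈ insert a' s := by
      intro i
      refine Fin.cases ?_ (fun j => ?_) i
      · exact hx1
      · have : j = 0 := Subsingleton.elim _ _
        subst this
        exact hx2
    have := hrel 2 req ![x1, x2] hpair
    have heq2 : RelMap req (fun i => ((f' ((![x1, x2]) i)) : M)) := by
      rw [hreq]
      show ((f' x1 : M)) = ((f' x2 : M))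
      rw [he]
    have hvals : (x1 : M) = (x2 : M) := (hreq _).1 (this.2 heq2)
    exact Subtype.ext hvals
  exact ⟨f', ⟨hinj, hrel⟩, hfeq⟩

/-- The constructed substructure is a core. -/
theorem coreN : IsCore L ↥(Set.range a) := by
  intro e
  have hple' : ∀ (nr : ℕ) (x : Fin nr → ↥(Set.range a)),
      ple L (fun i => (x i : M)) (fun i => ((e (x i)) : M)) := by
    intro nr x r hr
    exact e.map_rel r x hr
  have hback : ∀ (nr : ℕ) (x : Fin nr → ↥(Set.range a)),
      ple L (fun i => ((e (x i)) : M)) (fun i => (x i : M)) := by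
    intro nr x
    exact maxN hmaxa _ (fun i => (x i).2) _ (hple' nr x)
  obtain ⟨req, hreq⟩ := containsPP_eq hPP
  constructor
  · intro x y hxy
    have h1 : RelMap req (fun i : Fin 2 => ((e ((![x, y]) i)) : M)) := by
      rw [hreq]
      show ((e x : M)) = ((e y : M))
      rw [hxy]
    have h2 := hback 2 ![x, y] req h1
    rw [hreq] at h2
    have : ((![x, y] 0 : M)) = ((![x, y] 1 : M)) := h2
    exact Subtype.ext this
  · intro n r x
    constructor
    · intro hr
      exact hback n x r hr
    · intro hr
      exact hple' n x r hr

/-- The constructed substructure is homogeneous. -/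
theorem homogN [Countable M] : IsHomogeneous L ↥(Set.range a) := by
  intro s hs f hinj hiff
  exact bf_limit id s f hs ⟨hinj, hiff⟩ (H1N hM hPP hmaxa hsata) (H1N hM hPP hmaxa hsata)

end WithSeq

/-- The extension lemma via homogeneity of the target and a strong map. -/
theorem H1_of_homog {X Y : Type u} [L.Structure X] [L.Structure Y]
    (u : X →[L] Y) (hu_inj : Function.Injective u)
    (hu_iff : ∀ (n : ℕ) (r : L.Relations n) (x : Fin n → X),
      RelMap r (⇑u ∘ x) ↔ RelMap r x)
    (hY : IsHomogeneous L Y) :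
    ∀ (s : Set X) (f : X → Y), s.Finite → PStrong L s f → ∀ a : X,
      ∃ f', PStrong L (insert a s) f' ∧ Set.EqOn f f' s := by
  classical
  intro s f hs hps a
  set F : Y → Y := fun y => if hy : ∃ x ∈ s, u x = y then f hy.choose else y with hF
  have hFu : ∀ x ∈ s, F (u x) = f x := by
    intro x hx
    have hy : ∃ x' ∈ s, u x' = u x := ⟨x, hx, rfl⟩
    rw [hF]
    simp only [dif_pos hy]
    have := hy.choose_spec
    rw [hu_inj this.2]
  have hFinj : Set.InjOn F (u '' s) := by
    rintro y1 ⟨x1, hx1, rfl⟩ y2 ⟨x2, hx2, rfl⟩ he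
    rw [hFu x1 hx1, hFu x2 hx2] at he
    rw [hps.1 hx1 hx2 he]
  have hFrel : ∀ (n : ℕ) (r : L.Relations n) (y : Fin n → Y), (∀ i, y i ∈ u '' s) →
      (RelMap r y ↔ RelMap r (F ∘ y)) := by
    intro n r y hy
    have hxs : ∀ i, ∃ x ∈ s, u x = y i := fun i => hy i
    choose xs hxs1 hxs2 using hxs
    have hyx : y = ⇑u ∘ xs := funext fun i => (hxs2 i).symm
    have hFy : F ∘ y = f ∘ xs := by
      funext i
      simp only [Function.comp_apply]
      rw [← hxs2 i, hFu (xs i) (hxs1 i)]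
    rw [hFy, hyx, hu_iff n r xs]
    exact hps.2 n r xs hxs1
  obtain ⟨α, hα⟩ := hY (u '' s) (hs.image u) F hFinj hFrel
  set f' : X → Y := ⇑α ∘ ⇑u with hf'
  have hfeq : Set.EqOn f f' s := by
    intro x hx
    rw [hf']
    show f x = α (u x)
    rw [hα (u x) ⟨x, hx, rfl⟩, hFu x hx]
  refine ⟨f', ⟨?_, ?_⟩, hfeq⟩
  · intro x1 _ x2 _ he
    exact hu_inj (α.injective he)
  · intro n r x _
    have h1 : RelMap r x ↔ RelMap r (⇑u ∘ x) := (hu_iff n r x).symm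
    have h2 : RelMap r (⇑α ∘ (⇑u ∘ x)) ↔ RelMap r (⇑u ∘ x) := α.map_rel r (⇑u ∘ x)
    rw [h1, ← h2]
    exact Iff.rfl

end Main

end CoreAux
open CoreAux in
theorem stmt_8 {L : Language} [L.IsRelational] {M : Type u} [L.Structure M] [Countable M]
    (hM : Oligomorphic L M) (hPP : ContainsPP L M) :
    ∃ (N : Type u) (iN : L.Structure N),
      @IsHomogeneous L N iN ∧ @IsCore L N iN ∧ @HomEquiv L M N _ iN ∧
        ∀ (N' : Type u) (iN' : L.Structure N'),
          @IsHomogeneous L N' iN' → @IsCore L N' iN' → @HomEquiv L M N' _ iN' →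
            Nonempty (@Language.Equiv L N N' iN iN') := by
  classical
  rcases isEmpty_or_nonempty M with hM0 | hM0
  · -- M is empty; take N := M
    refine ⟨M, ‹L.Structure M›, ?_, ?_, ⟨⟨Hom.id L M⟩, ⟨Hom.id L M⟩⟩, ?_⟩
    · intro s _ f _ _
      exact ⟨Language.Equiv.refl L M, fun x _ => isEmptyElim x⟩
    · intro e
      refine ⟨fun x => isEmptyElim x, ?_⟩
      intro n r x
      match n, r, x with
      | 0, r, x => rw [Subsingleton.elim (⇑e ∘ x) x]
      | n + 1, r, x => exact isEmptyElim (x 0)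
    · rintro N' iN' _ _ ⟨⟨u⟩, ⟨v⟩⟩
      haveI : IsEmpty N' := ⟨fun y => hM0.false (v y)⟩
      refine ⟨⟨Equiv.equivOfIsEmpty M N', fun {n} f _ => isEmptyElim f, ?_⟩⟩
      intro n r x
      match n, r, x with
      | 0, r, x =>
          constructor
          · intro hr
            have h2 := v.map_rel r ((Equiv.equivOfIsEmpty M N').toFun ∘ x) hr
            rwa [Subsingleton.elim (⇑v ∘ ((Equiv.equivOfIsEmpty M N').toFun ∘ x)) x] at h2
          · intro hr
            have h2 := u.map_rel r x hr
            rwa [Subsingleton.elim (⇑u ∘ x) ((Equiv.equivOfIsEmpty M N').toFun ∘ x)] at h2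
      | n + 1, r, x => exact isEmptyElim (x 0)
  · haveI := hM0
    obtain ⟨a, h, hrange, hmaxa, hsata, hplea⟩ := exists_good hM hPP
    set incl : ↥(Set.range a) →[L] M :=
      ⟨Subtype.val, fun {n} f _ => isEmptyElim f, fun {n} r x hr => hr⟩ with hincl
    set hMN : M →[L] ↥(Set.range a) :=
      ⟨fun x => ⟨h x, hrange x⟩, fun {n} f _ => isEmptyElim f,
        fun {n} r x hr => hplea n x r hr⟩ with hhMN
    have hNcore := coreN hM hPP hmaxa hsata
    have hNhom := homogN hM hPP hmaxa hsata
    refine ⟨↥(Set.range a), inferInstance, hNhom, hNcore, ⟨⟨hMN⟩, ⟨incl⟩⟩, ?_⟩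
    rintro N' iN' hhom' hcore' ⟨⟨f'⟩, ⟨g'⟩⟩
    set u : ↥(Set.range a) →[L] N' := f'.comp incl with hu
    set v : N' →[L] ↥(Set.range a) := hMN.comp g' with hv
    have hvu := hNcore (v.comp u)
    have huv := hcore' (u.comp v)
    have hu_inj : Function.Injective ⇑u := by
      intro x y hxy
      refine hvu.1 ?_
      show v (u x) = v (u y)
      rw [hxy]
    have hv_inj : Function.Injective ⇑v := by
      intro x y hxy
      refine huv.1 ?_
      show u (v x) = u (v y)
      rw [hxy]
    have hu_iff : ∀ (n : ℕ) (r : L.Relations n) (x : Fin n → ↥(Set.range a)),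
        RelMap r (⇑u ∘ x) ↔ RelMap r x := by
      intro n r x
      constructor
      · intro hr
        have h2 := v.map_rel r (⇑u ∘ x) hr
        have h3 : (⇑v ∘ (⇑u ∘ x)) = ⇑(v.comp u) ∘ x := rfl
        rw [h3] at h2
        exact (hvu.2 n r x).1 h2
      · exact u.map_rel r x
    have hv_iff : ∀ (n : ℕ) (r : L.Relations n) (x : Fin n → N'),
        RelMap r (⇑v ∘ x) ↔ RelMap r x := by
      intro n r x
      constructor
      · intro hr
        have h2 := u.map_rel r (⇑v ∘ x) hr
        have h3 : (⇑u ∘ (⇑v ∘ x)) = ⇑(u.comp v) ∘ x := rfl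
        rw [h3] at h2
        exact (huv.2 n r x).1 h2
      · exact v.map_rel r x
    have hg'_inj : Function.Injective ⇑g' := by
      intro x y hxy
      refine (hcore' (f'.comp g')).1 ?_
      show f' (g' x) = f' (g' y)
      rw [hxy]
    haveI : Countable N' := hg'_inj.countable
    have H1 := H1_of_homog u hu_inj hu_iff hhom'
    have H1' := H1_of_homog v hv_inj hv_iff hNhom
    have h₀ : PStrong L (∅ : Set ↥(Set.range a)) ⇑u :=
      ⟨Set.injOn_empty _, fun n r x _ => (hu_iff n r x).symm⟩
    obtain ⟨α, _⟩ := bf_limit ⇑v ∅ ⇑u Set.finite_empty h₀ H1 H1'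
    exact ⟨α⟩
end

section
/- Let Γ be an ω-categorical structure and let f : Γ₁ → Γ₂ be a homomorphism between substructures of Γ that preserves all existential positive formulas satisfied in Γ (with parameters from Γ₁). If Γ contains all existential positive definable relations, then for any tuple ū in Γ₁ and any tuple b̄ in Γ inducing a structure isomorphic to that induced by ū, any homomorphism defined on b̄ by b_j ↦ f(u_j) extends to a homomorphism on any finite superset of b̄ into Γ. -/
open FirstOrder Language Structure

universe u v w

/-!
By oligomorphicity, finitely many atomic facts about `b̄ = (b₁, …, b_m)` already imply all of
them in `Γ` (one failing fact per orbit of `m`-tuples), so the canonical conjunctive query of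
`b̄` may be taken finite; quantifying away the new elements gives an existential positive
formula true of `b₁, …, b_k`. Since `Γ` names it by a relation and `b̄`, `ū` satisfy the same
relations, it holds of `ū`, hence of `f ū`. A witness for it extends `b_j ↦ f u_j` and satisfies
every atomic fact of `b̄`, which is exactly a homomorphism on the finite superset.
-/

/-- An atomic statement about the coordinates of an `N`-tuple `x`: either `x p = x q`, or
`R (x ∘ σ)` for a relation symbol `R`. -/
def AtomicFact (L : Language) (N : ℕ) : Type _ :=
  (Fin N × Fin N) ⊕ (Σ n : ℕ, L.Relations n × (Fin n → Fin N))

namespace AtomicFact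

variable {L : Language} {M : Type u} [L.Structure M] {N : ℕ}

def Holds (t : Fin N → M) : AtomicFact L N → Prop
  | .inl (p, q) => t p = t q
  | .inr ⟨_, r, σ⟩ => RelMap r (t ∘ σ)

theorem holds_equiv_comp (ψ : AtomicFact L N) (α : M ≃[L] M) (t : Fin N → M) :
    ψ.Holds (α ∘ t) ↔ ψ.Holds t :=
  match ψ with
  | .inl _ => α.injective.eq_iff
  | .inr ⟨_, r, σ⟩ => α.map_rel r (t ∘ σ)

def toBoundedFormula {α : Type w} {n : ℕ} (e : Fin N → α ⊕ Fin n) :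
    AtomicFact L N → L.BoundedFormula α n
  | .inl (p, q) => (Term.var (e p)).bdEqual (Term.var (e q))
  | .inr ⟨_, r, σ⟩ => r.boundedFormula fun i => Term.var (e (σ i))

theorem isEP_toBoundedFormula {α : Type w} {n : ℕ} (e : Fin N → α ⊕ Fin n)
    (ψ : AtomicFact L N) : IsEP (ψ.toBoundedFormula e) :=
  match ψ with
  | .inl _ => IsEP.equal _ _
  | .inr _ => IsEP.rel _ _

theorem realize_toBoundedFormula {α : Type w} {n : ℕ} (e : Fin N → α ⊕ Fin n)
    (ψ : AtomicFact L N) (v : α → M) (xs : Fin n → M) :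
    (ψ.toBoundedFormula e).Realize v xs ↔ ψ.Holds (Sum.elim v xs ∘ e) :=
  match ψ with
  | .inl _ => Iff.rfl
  | .inr _ => Iff.rfl

end AtomicFact

open AtomicFact

/-- Each orbit representative failing some fact of `t` contributes one such fact. -/
theorem Oligomorphic.exists_finset_determining {L : Language} {M : Type u} [L.Structure M]
    (hM : Oligomorphic L M) {N : ℕ} (t : Fin N → M) :
    ∃ S : Finset (AtomicFact L N), (∀ ψ ∈ S, ψ.Holds t) ∧
      ∀ s : Fin N → M, (∀ ψ ∈ S, ψ.Holds s) → ∀ ψ : AtomicFact L N, ψ.Holds t → ψ.Holds s := by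
  classical
  obtain ⟨F, hF, hrep⟩ := hM N
  have hwitness : ∀ r : Fin N → M, ∃ S : Finset (AtomicFact L N), (∀ ψ ∈ S, ψ.Holds t) ∧
      ((∀ ψ ∈ S, ψ.Holds r) → ∀ ψ : AtomicFact L N, ψ.Holds t → ψ.Holds r) := by
    intro r
    by_cases hr : ∀ ψ : AtomicFact L N, ψ.Holds t → ψ.Holds r
    · exact ⟨∅, by simp, fun _ => hr⟩
    · obtain ⟨ψ, hψt, hψr⟩ : ∃ ψ : AtomicFact L N, ψ.Holds t ∧ ¬ ψ.Holds r := by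
        simpa using hr
      exact ⟨{ψ}, by simpa using hψt, fun h => absurd (h ψ (Finset.mem_singleton_self ψ)) hψr⟩
  choose S hSt hSr using hwitness
  refine ⟨hF.toFinset.biUnion S, ?_, ?_⟩
  · simp only [Finset.mem_biUnion]
    rintro ψ ⟨r, -, hψ⟩
    exact hSt r ψ hψ
  · intro s hs ψ hψ
    obtain ⟨r, hrF, α, hα⟩ := hrep s
    obtain rfl : ⇑α ∘ r = s := funext hα
    simp only [holds_equiv_comp] at hs ⊢
    exact hSr r (fun χ hχ => hs χ (Finset.mem_biUnion.2 ⟨r, hF.mem_toFinset.2 hrF, hχ⟩)) ψ hψ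

section IsEP

variable {L : Language} {α : Type w}

theorem IsEP.exs : ∀ {n : ℕ} {φ : L.BoundedFormula α n}, IsEP φ → IsEP φ.exs
  | 0, _, h => h
  | _ + 1, φ, h => show IsEP φ.ex.exs from IsEP.exs h.ex

theorem IsEP.foldr_inf {n : ℕ} {φ₀ : L.BoundedFormula α n} (h₀ : IsEP φ₀) :
    ∀ {l : List (L.BoundedFormula α n)}, (∀ φ ∈ l, IsEP φ) → IsEP (l.foldr (· ⊓ ·) φ₀)
  | [], _ => h₀
  | _ :: _, hl => IsEP.inf (hl _ List.mem_cons_self)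
      (IsEP.foldr_inf h₀ fun φ hφ => hl φ (List.mem_cons_of_mem _ hφ))

end IsEP

theorem FirstOrder.Language.BoundedFormula.realize_foldr_inf' {L : Language} {M : Type u}
    [L.Structure M] {α : Type w} {n : ℕ} (φ₀ : L.BoundedFormula α n)
    (l : List (L.BoundedFormula α n)) (v : α → M) (xs : Fin n → M) :
    (l.foldr (· ⊓ ·) φ₀).Realize v xs ↔ φ₀.Realize v xs ∧ ∀ φ ∈ l, φ.Realize v xs := by
  induction l with
  | nil => simp only [List.foldr_nil, List.not_mem_nil, IsEmpty.forall_iff, implies_true, and_true]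
  | cons φ l ih =>
    simp only [List.foldr_cons, realize_inf, ih, List.forall_mem_cons]
    tauto

theorem Fin.sumElim_comp_finSumFinEquiv_symm {α : Type*} {k m : ℕ} (v : Fin k → α)
    (xs : Fin m → α) : Sum.elim v xs ∘ finSumFinEquiv.symm = Fin.append v xs := by
  rw [Equiv.comp_symm_eq]
  exact Fin.append_comp_sumElim.symm

/-- The canonical conjunctive query of `t`, cut down to finitely many conjuncts; the conjunct
`x₀ = x₀` stands in for `⊤`, which is not existential positive. -/
theorem Oligomorphic.exists_isEP_canonicalQuery {L : Language} {M : Type u} [L.Structure M]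
    (hM : Oligomorphic L M) {k m : ℕ} [NeZero (k + m)] (t : Fin (k + m) → M) :
    ∃ φ : L.BoundedFormula (Fin k) m, IsEP φ ∧
      φ.Realize (t ∘ Fin.castAdd m) (t ∘ Fin.natAdd k) ∧
      ∀ (v : Fin k → M) (xs : Fin m → M), φ.Realize v xs →
        ∀ ψ : AtomicFact L (k + m), ψ.Holds t → ψ.Holds (Fin.append v xs) := by
  obtain ⟨S, hSt, hS⟩ := hM.exists_finset_determining t
  let ψ₀ : AtomicFact L (k + m) := .inl (0, 0)
  have hrealize : ∀ (v : Fin k → M) (xs : Fin m → M),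
      ((S.toList.map (toBoundedFormula finSumFinEquiv.symm)).foldr (· ⊓ ·)
        (ψ₀.toBoundedFormula finSumFinEquiv.symm)).Realize v xs ↔
        ∀ ψ ∈ S, ψ.Holds (Fin.append v xs) := by
    intro v xs
    simp only [BoundedFormula.realize_foldr_inf', List.forall_mem_map, Finset.mem_toList,
      realize_toBoundedFormula, Fin.sumElim_comp_finSumFinEquiv_symm]
    exact and_iff_right rfl
  refine ⟨_, IsEP.foldr_inf (isEP_toBoundedFormula _ ψ₀) ?_, (hrealize _ _).2 ?_,
    fun v xs hφ => hS _ ((hrealize v xs).1 hφ)⟩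
  · simp only [List.mem_map]
    rintro _ ⟨ψ, -, rfl⟩
    exact isEP_toBoundedFormula _ ψ
  · simpa only [Function.comp_def, Fin.append_castAdd_natAdd] using hSt

theorem ContainsEP.realize_iff_of_relMap_iff {L : Language} {M : Type u} [L.Structure M]
    (hEP : ContainsEP L M) {k : ℕ} {b u : Fin k → M}
    (h : ∀ r : L.Relations k, RelMap r b ↔ RelMap r u) {φ : L.Formula (Fin k)} (hφ : IsEP φ) :
    φ.Realize b ↔ φ.Realize u := by
  obtain ⟨r, hr⟩ := hEP k φ hφ
  rw [← hr, ← hr]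
  exact h r

theorem stmt_14_general {L : Language} {M : Type u} [L.Structure M]
    (hM : Oligomorphic L M) (hEP : ContainsEP L M)
    (G1 : Set M) (f : M → M)
    (hpres : ∀ (n : ℕ) (φ : L.Formula (Fin n)), IsEP φ → ∀ x : Fin n → M,
      (∀ i, x i ∈ G1) → φ.Realize x → φ.Realize (f ∘ x)) :
    ∀ (k : ℕ) (u : Fin k → M), (∀ i, u i ∈ G1) →
      ∀ b : Fin k → M,
        (∀ i j, b i = b j ↔ u i = u j) →
        (∀ (n : ℕ) (r : L.Relations n) (σ : Fin n → Fin k),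
          RelMap r (b ∘ σ) ↔ RelMap r (u ∘ σ)) →
        ∀ (m : ℕ) (bb : Fin (k + m) → M), (∀ i : Fin k, bb (Fin.castAdd m i) = b i) →
          ∃ h : M → M, (∀ i, h (b i) = f (u i)) ∧
            (∀ p q : Fin (k + m), bb p = bb q → h (bb p) = h (bb q)) ∧
            ∀ (n : ℕ) (r : L.Relations n) (σ : Fin n → Fin (k + m)),
              RelMap r (bb ∘ σ) → RelMap r (h ∘ bb ∘ σ) := by
  intro k u hu b _ hbrel m bb hbb
  rcases Nat.eq_zero_or_pos (k + m) with hkm | hkm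
  · exact ⟨id, fun i => absurd i.isLt (by omega), fun _ _ => congrArg id, fun _ _ _ => id⟩
  have : NeZero (k + m) := ⟨hkm.ne'⟩
  obtain ⟨φ, hφ, hφbb, hφfacts⟩ := hM.exists_isEP_canonicalQuery bb
  have hb_real : φ.exs.Realize b := by
    rw [show b = bb ∘ Fin.castAdd m from (funext hbb).symm]
    exact BoundedFormula.realize_exs.2 ⟨_, hφbb⟩
  have hu_real : φ.exs.Realize u :=
    (hEP.realize_iff_of_relMap_iff (fun r => hbrel k r id) hφ.exs).1 hb_real
  obtain ⟨xs, hxs⟩ := BoundedFormula.realize_exs.1 (hpres k _ hφ.exs u hu hu_real)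
  set c := Fin.append (f ∘ u) xs with hc
  have hfacts : ∀ ψ : AtomicFact L (k + m), ψ.Holds bb → ψ.Holds c := hφfacts _ _ hxs
  have hfactors : Function.FactorsThrough c bb := fun p q hpq => hfacts (.inl (p, q)) hpq
  have hext : ∀ p, Function.extend bb c id (bb p) = c p := hfactors.extend_apply id
  refine ⟨Function.extend bb c id, fun i => ?_, fun p q hpq => ?_, fun n r σ hr => ?_⟩
  · rw [← hbb i, hext, hc, Fin.append_left, Function.comp_apply]
  · rw [hext, hext]
    exact hfactors hpq
  · have hcomp : Function.extend bb c id ∘ bb ∘ σ = c ∘ σ := funext fun i => hext (σ i)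
    rw [hcomp]
    exact hfacts (.inr ⟨n, r, σ⟩) hr

theorem stmt_14 {L : Language} [L.IsRelational] {M : Type u} [L.Structure M] [Countable M]
    (hM : Oligomorphic L M) (hEP : ContainsEP L M)
    (G1 G2 : Set M) (f : M → M) (hmap : Set.MapsTo f G1 G2)
    (hhom : ∀ (n : ℕ) (r : L.Relations n) (x : Fin n → M), (∀ i, x i ∈ G1) →
      RelMap r x → RelMap r (f ∘ x))
    (hpres : ∀ (n : ℕ) (φ : L.Formula (Fin n)), IsEP φ → ∀ x : Fin n → M,
      (∀ i, x i ∈ G1) → φ.Realize x → φ.Realize (f ∘ x)) :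
    ∀ (k : ℕ) (u : Fin k → M), (∀ i, u i ∈ G1) →
      ∀ b : Fin k → M,
        (∀ i j, b i = b j ↔ u i = u j) →
        (∀ (n : ℕ) (r : L.Relations n) (σ : Fin n → Fin k),
          RelMap r (b ∘ σ) ↔ RelMap r (u ∘ σ)) →
        ∀ (m : ℕ) (bb : Fin (k + m) → M), (∀ i : Fin k, bb (Fin.castAdd m i) = b i) →
          ∃ h : M → M, (∀ i, h (b i) = f (u i)) ∧
            (∀ p q : Fin (k + m), bb p = bb q → h (bb p) = h (bb q)) ∧
            ∀ (n : ℕ) (r : L.Relations n) (σ : Fin n → Fin (k + m)),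
              RelMap r (bb ∘ σ) → RelMap r (h ∘ bb ∘ σ) :=
  stmt_14_general hM hEP G1 f hpres
end
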